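/- arXiv:1402.0810 — 2 statements merged into one kernel-verified Lean document; each statement's English description precedes it below -/
import Mathlib

section
/- Let A = {P^A_i} and B = {P^B_j} be projective observables on ℂ^d. Then Q_1(A→B) = 0 if and only if P^A_i P^B_j = P^B_j P^A_i for all i and j. -/
open scoped BigOperators ComplexOrder
open Matrix

noncomputable section

/-- A projective observable: a finite family of mutually orthogonal
self-adjoint idempotents summing to the identity. -/
def IsProjObs {d r : ℕ} (P : Fin r → Matrix (Fin d) (Fin d) ℂ) : Prop :=
  (∀ i, (P i).IsHermitian) ∧ (∀ i, P i * P i = P i) ∧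
    (∀ i k, i ≠ k → P i * P k = 0) ∧ (∑ i, P i = 1)

/-- A density matrix: positive semidefinite with unit trace. -/
def IsDensity {d : ℕ} (ρ : Matrix (Fin d) (Fin d) ℂ) : Prop :=
  ρ.PosSemidef ∧ ρ.trace = 1

/-- The measurement channel `E^A(ρ) = Σ_i P_i ρ P_i` of a projective observable. -/
def measChannel {d r : ℕ} (P : Fin r → Matrix (Fin d) (Fin d) ℂ)
    (ρ : Matrix (Fin d) (Fin d) ℂ) : Matrix (Fin d) (Fin d) ℂ :=
  ∑ i, P i * ρ * P i

/-- `p^B_ρ(j) = tr(P^B_j ρ)`. -/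
def probB {d rB : ℕ} (Q : Fin rB → Matrix (Fin d) (Fin d) ℂ)
    (ρ : Matrix (Fin d) (Fin d) ℂ) (j : Fin rB) : ℝ :=
  ((Q j * ρ).trace).re

/-- `q^{A→B}_ρ(j) = tr(P^B_j Σ_i P^A_i ρ P^A_i)`. -/
def probAB {d rA rB : ℕ} (P : Fin rA → Matrix (Fin d) (Fin d) ℂ)
    (Q : Fin rB → Matrix (Fin d) (Fin d) ℂ)
    (ρ : Matrix (Fin d) (Fin d) ℂ) (j : Fin rB) : ℝ :=
  ((Q j * measChannel P ρ).trace).re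

open Classical in
/-- The positive semidefinite square root of a PSD matrix (junk value `0` otherwise). -/
noncomputable def msqrt {d : ℕ} (A : Matrix (Fin d) (Fin d) ℂ) :
    Matrix (Fin d) (Fin d) ℂ :=
  if h : A.PosSemidef then (h.1.eigenvectorUnitary : Matrix (Fin d) (Fin d) ℂ) *
    diagonal ((↑) ∘ Real.sqrt ∘ h.1.eigenvalues) *
    (star h.1.eigenvectorUnitary : Matrix (Fin d) (Fin d) ℂ) else 0

/-- `|X| = √(Xᴴ X)`, the positive semidefinite absolute value of a matrix. -/
noncomputable def matAbs {d : ℕ} (X : Matrix (Fin d) (Fin d) ℂ) :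
    Matrix (Fin d) (Fin d) ℂ :=
  msqrt (Xᴴ * X)

/-- The quantum fidelity `F(ρ,σ) = tr √(√ρ σ √ρ)`. -/
noncomputable def qFid {d : ℕ} (ρ σ : Matrix (Fin d) (Fin d) ℂ) : ℝ :=
  ((msqrt (msqrt ρ * σ * msqrt ρ)).trace).re

/-- Variational distance `D_1(p,q) = (1/2) Σ_j |p_j − q_j|`. -/
def distL1 {rB : ℕ} (p q : Fin rB → ℝ) : ℝ := (1 / 2) * ∑ j, |p j - q j|

/-- Chebyshev distance `D_∞(p,q) = max_j |p_j − q_j|`. -/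
noncomputable def distLinf {rB : ℕ} (p q : Fin rB → ℝ) : ℝ := ⨆ j, |p j - q j|

/-- Classical fidelity `F(p,q) = Σ_j √(p_j q_j)`. -/
noncomputable def classFid {rB : ℕ} (p q : Fin rB → ℝ) : ℝ :=
  ∑ j, Real.sqrt (p j * q j)

/-- `Q_1(A→B)`. -/
noncomputable def Q1 {d rA rB : ℕ} (P : Fin rA → Matrix (Fin d) (Fin d) ℂ)
    (Q : Fin rB → Matrix (Fin d) (Fin d) ℂ) : ℝ :=
  sSup {x : ℝ | ∃ ρ, IsDensity ρ ∧ x = distL1 (probAB P Q ρ) (probB Q ρ)}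

/-- `Q_∞(A→B)`. -/
noncomputable def Qinf {d rA rB : ℕ} (P : Fin rA → Matrix (Fin d) (Fin d) ℂ)
    (Q : Fin rB → Matrix (Fin d) (Fin d) ℂ) : ℝ :=
  sSup {x : ℝ | ∃ ρ, IsDensity ρ ∧ x = distLinf (probAB P Q ρ) (probB Q ρ)}

/-- `Q_F(A→B)`. -/
noncomputable def QF {d rA rB : ℕ} (P : Fin rA → Matrix (Fin d) (Fin d) ℂ)
    (Q : Fin rB → Matrix (Fin d) (Fin d) ℂ) : ℝ :=
  sSup {x : ℝ | ∃ ρ, IsDensity ρ ∧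
    x = 1 - (classFid (probAB P Q ρ) (probB Q ρ)) ^ 2}

/-- The rank-one projection `|v⟩⟨v|` onto a (unit) vector `v`. -/
def proj {d : ℕ} (v : Fin d → ℂ) : Matrix (Fin d) (Fin d) ℂ :=
  Matrix.vecMulVec v (star v)

/-! The measurement channel `E_A(X) = Σ_i P^A_i X P^A_i` is self-dual for the trace pairing, so
`q^{A→B}_ρ(j) = tr(E_A(P^B_j) ρ)`. Hence `Q_1(A→B) = 0` says that the Hermitian matrix
`E_A(P^B_j) - P^B_j` has zero expectation in every state, which forces it to vanish. Finally `X` is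
fixed by `E_A` exactly when it commutes with every `P^A_i`, since multiplying `E_A(X)` by `P^A_i` on
either side gives `P^A_i X P^A_i`. -/

variable {d r : ℕ}

namespace IsProjObs

variable {P : Fin r → Matrix (Fin d) (Fin d) ℂ}

lemma trace_mul_mul_self (hP : IsProjObs P) (i : Fin r) (X : Matrix (Fin d) (Fin d) ℂ) :
    (P i * X * P i).trace = (P i * X).trace := by
  rw [Matrix.trace_mul_cycle, hP.2.1 i]

lemma sum_trace_mul (hP : IsProjObs P) (X : Matrix (Fin d) (Fin d) ℂ) :
    ∑ i, (P i * X).trace = X.trace := by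
  rw [← Matrix.trace_sum, ← Finset.sum_mul, hP.2.2.2, one_mul]

lemma posSemidef_mul_mul_self (hP : IsProjObs P) (i : Fin r) {ρ : Matrix (Fin d) (Fin d) ℂ}
    (hρ : ρ.PosSemidef) : (P i * ρ * P i).PosSemidef := by
  simpa only [(hP.1 i).eq] using hρ.mul_mul_conjTranspose_same (P i)

lemma isDensity_measChannel (hP : IsProjObs P) {ρ : Matrix (Fin d) (Fin d) ℂ}
    (hρ : IsDensity ρ) : IsDensity (measChannel P ρ) :=
  ⟨Matrix.posSemidef_sum _ fun i _ => hP.posSemidef_mul_mul_self i hρ.1, by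
    simp only [measChannel, Matrix.trace_sum, hP.trace_mul_mul_self, hP.sum_trace_mul, hρ.2]⟩

lemma probB_nonneg (hP : IsProjObs P) {ρ : Matrix (Fin d) (Fin d) ℂ} (hρ : IsDensity ρ)
    (i : Fin r) : 0 ≤ probB P ρ i := by
  have h := (hP.posSemidef_mul_mul_self i hρ.1).trace_nonneg
  rw [hP.trace_mul_mul_self] at h
  exact (Complex.nonneg_iff.1 h).1

lemma sum_probB (hP : IsProjObs P) {ρ : Matrix (Fin d) (Fin d) ℂ} (hρ : IsDensity ρ) :
    ∑ i, probB P ρ i = 1 := by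
  simp only [probB, ← Complex.re_sum, hP.sum_trace_mul, hρ.2, Complex.one_re]

lemma mul_measChannel (hP : IsProjObs P) (i : Fin r) (X : Matrix (Fin d) (Fin d) ℂ) :
    P i * measChannel P X = P i * X * P i := by
  rw [measChannel, Finset.mul_sum, Finset.sum_eq_single i
    (fun k _ hk => by rw [← Matrix.mul_assoc, ← Matrix.mul_assoc, hP.2.2.1 i k hk.symm,
      Matrix.zero_mul, Matrix.zero_mul]) (by simp)]
  rw [← Matrix.mul_assoc, ← Matrix.mul_assoc, hP.2.1 i]

lemma measChannel_mul (hP : IsProjObs P) (i : Fin r) (X : Matrix (Fin d) (Fin d) ℂ) :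
    measChannel P X * P i = P i * X * P i := by
  rw [measChannel, Finset.sum_mul, Finset.sum_eq_single i
    (fun k _ hk => by rw [Matrix.mul_assoc, hP.2.2.1 k i hk, Matrix.mul_zero]) (by simp)]
  rw [Matrix.mul_assoc, hP.2.1 i]

lemma measChannel_eq_self_iff (hP : IsProjObs P) (X : Matrix (Fin d) (Fin d) ℂ) :
    measChannel P X = X ↔ ∀ i, P i * X = X * P i := by
  constructor
  · intro h i
    calc P i * X = P i * measChannel P X := by rw [h]
      _ = measChannel P X * P i := by rw [hP.mul_measChannel, hP.measChannel_mul]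
      _ = X * P i := by rw [h]
  · intro h
    calc measChannel P X = ∑ i, X * P i :=
          Finset.sum_congr rfl fun i _ => by rw [h i, Matrix.mul_assoc, hP.2.1 i]
      _ = X := by rw [← Finset.mul_sum, hP.2.2.2, Matrix.mul_one]

lemma isHermitian_measChannel (hP : IsProjObs P) {X : Matrix (Fin d) (Fin d) ℂ}
    (hX : X.IsHermitian) : (measChannel P X).IsHermitian := by
  refine isSelfAdjoint_sum _ fun i _ => ?_
  have h := Matrix.isHermitian_mul_mul_conjTranspose (P i) hX
  rwa [(hP.1 i).eq] at h

end IsProjObs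

lemma trace_mul_measChannel (P : Fin r → Matrix (Fin d) (Fin d) ℂ)
    (X ρ : Matrix (Fin d) (Fin d) ℂ) :
    (X * measChannel P ρ).trace = (measChannel P X * ρ).trace := by
  simp only [measChannel, Finset.mul_sum, Finset.sum_mul, Matrix.trace_sum]
  refine Finset.sum_congr rfl fun i _ => ?_
  rw [← Matrix.mul_assoc, ← Matrix.mul_assoc, Matrix.trace_mul_comm, ← Matrix.mul_assoc,
    ← Matrix.mul_assoc]

lemma trace_mul_vecMulVec_star (M : Matrix (Fin d) (Fin d) ℂ) (v : Fin d → ℂ) :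
    (M * vecMulVec v (star v)).trace = star v ⬝ᵥ M *ᵥ v := by
  rw [Matrix.mul_vecMulVec, Matrix.trace_vecMulVec, dotProduct_comm]

lemma Matrix.IsHermitian.eq_zero_of_forall_isDensity {M : Matrix (Fin d) (Fin d) ℂ}
    (hM : M.IsHermitian) (h : ∀ ρ, IsDensity ρ → ((M * ρ).trace).re = 0) : M = 0 := by
  have hquad : ∀ v, star v ⬝ᵥ M *ᵥ v = 0 := by
    intro v
    rcases eq_or_ne v 0 with rfl | hv
    · simp
    have hs : 0 < v ⬝ᵥ star v := dotProduct_self_star_pos_iff.2 hv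
    have hρ : IsDensity ((v ⬝ᵥ star v)⁻¹ • vecMulVec v (star v)) :=
      ⟨(posSemidef_vecMulVec_self_star v).smul (inv_nonneg.2 hs.le), by
        rw [Matrix.trace_smul, Matrix.trace_vecMulVec, smul_eq_mul, inv_mul_cancel₀ hs.ne']⟩
    have hre := h _ hρ
    rw [Matrix.mul_smul, Matrix.trace_smul, trace_mul_vecMulVec_star, smul_eq_mul,
      Complex.mul_re, (Complex.pos_iff.1 (inv_pos.2 hs)).2.symm, zero_mul, sub_zero] at hre
    exact Complex.ext
      ((mul_eq_zero.1 hre).resolve_left (Complex.pos_iff.1 (inv_pos.2 hs)).1.ne')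
      (hM.im_star_dotProduct_mulVec_self v)
  have hpsd : M.PosSemidef := .of_dotProduct_mulVec_nonneg hM fun v => (hquad v).ge
  exact Matrix.ext_of_mulVec_single fun i => by
    rw [(hpsd.dotProduct_mulVec_zero_iff _).1 (hquad _), Matrix.zero_mulVec]

lemma distL1_nonneg (p q : Fin r → ℝ) : 0 ≤ distL1 p q := by
  unfold distL1; positivity

lemma distL1_eq_zero_iff {p q : Fin r → ℝ} : distL1 p q = 0 ↔ p = q := by
  rw [distL1, mul_eq_zero, Finset.sum_eq_zero_iff_of_nonneg fun _ _ => abs_nonneg _, funext_iff]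
  simp [sub_eq_zero]

lemma distL1_le_one {p q : Fin r → ℝ} (hp : ∀ j, 0 ≤ p j) (hq : ∀ j, 0 ≤ q j)
    (hp1 : ∑ j, p j = 1) (hq1 : ∑ j, q j = 1) : distL1 p q ≤ 1 := by
  have : ∑ j, |p j - q j| ≤ ∑ j, (p j + q j) := Finset.sum_le_sum fun j _ =>
    abs_sub_le_iff.2 ⟨by linarith [hq j], by linarith [hp j]⟩
  rw [Finset.sum_add_distrib, hp1, hq1] at this
  unfold distL1
  linarith

lemma Q1_eq_zero_iff {rA rB : ℕ} {P : Fin rA → Matrix (Fin d) (Fin d) ℂ}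
    {Q : Fin rB → Matrix (Fin d) (Fin d) ℂ} (hP : IsProjObs P) (hQ : IsProjObs Q) :
    Q1 P Q = 0 ↔ ∀ ρ, IsDensity ρ → probAB P Q ρ = probB Q ρ := by
  have hbdd : BddAbove {x : ℝ | ∃ ρ, IsDensity ρ ∧ x = distL1 (probAB P Q ρ) (probB Q ρ)} := by
    refine ⟨1, ?_⟩
    rintro _ ⟨ρ, hρ, rfl⟩
    have hEρ := hP.isDensity_measChannel hρ
    exact distL1_le_one (hQ.probB_nonneg hEρ) (hQ.probB_nonneg hρ) (hQ.sum_probB hEρ)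
      (hQ.sum_probB hρ)
  constructor
  · intro h ρ hρ
    rw [← distL1_eq_zero_iff]
    exact le_antisymm (h ▸ le_csSup hbdd ⟨ρ, hρ, rfl⟩) (distL1_nonneg _ _)
  · intro h
    refine le_antisymm (Real.sSup_nonpos ?_) (Real.sSup_nonneg ?_) <;>
      rintro _ ⟨ρ, hρ, rfl⟩ <;> rw [h ρ hρ, distL1_eq_zero_iff.2 rfl]

theorem stmt_1_general {d rA rB : ℕ}
    (P : Fin rA → Matrix (Fin d) (Fin d) ℂ) (Q : Fin rB → Matrix (Fin d) (Fin d) ℂ)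
    (hP : IsProjObs P) (hQ : IsProjObs Q) :
    Q1 P Q = 0 ↔ (∀ i j, P i * Q j = Q j * P i) := by
  have hprobAB : ∀ ρ j, probAB P Q ρ j = ((measChannel P (Q j) * ρ).trace).re := fun ρ j => by
    rw [probAB, trace_mul_measChannel]
  rw [Q1_eq_zero_iff hP hQ, forall_comm]
  simp_rw [← hP.measChannel_eq_self_iff]
  constructor
  · intro h j
    rw [← sub_eq_zero]
    refine ((hP.isHermitian_measChannel (hQ.1 j)).sub (hQ.1 j)).eq_zero_of_forall_isDensity
      fun ρ hρ => ?_
    rw [Matrix.sub_mul, Matrix.trace_sub, Complex.sub_re, ← hprobAB, sub_eq_zero]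
    exact congrFun (h ρ hρ) j
  · intro h ρ _
    funext j
    rw [hprobAB, h j]
    rfl

theorem stmt_1 {d rA rB : ℕ} (hd : 0 < d)
    (P : Fin rA → Matrix (Fin d) (Fin d) ℂ) (Q : Fin rB → Matrix (Fin d) (Fin d) ℂ)
    (hP : IsProjObs P) (hQ : IsProjObs Q) :
    Q1 P Q = 0 ↔ (∀ i j, P i * Q j = Q j * P i) :=
  stmt_1_general P Q hP hQ
end
end

section
/- Let 0 ≤ d_c ≤ d−1, and let {a_i}_{i=1}^d and {b_j}_{j=1}^d be orthonormal bases of ℂ^d such that a_i = b_i for all i ≤ d_c, ⟨a_i, b_j⟩ = 0 whenever exactly one of i, j is ≤ d_c, and |⟨a_i, b_j⟩|² = 1/(d−d_c) whenever both i, j > d_c. Let A = {|a_i⟩⟨a_i|} and B = {|b_j⟩⟨b_j|} be the corresponding non-degenerate projective observables. Then Q_F(A→B) = Q_F(B→A) = 1 − 1/(d−d_c), and hence the mutual incompatibility Q_F(A,B) := (Q_F(A→B) + Q_F(B→A))/4 equals (1/2)(1 − 1/(d−d_c)). -/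
open scoped BigOperators ComplexOrder
open Matrix

noncomputable section

/-!
The two bases coincide off the block `S` of indices `≥ d_c` and are mutually unbiased on it,
with overlaps `1/|S|`. Hence, for every state, `q^{A→B}_ρ` is the coarse-graining of `p^B_ρ`
that replaces its values on `S` by their average `s/|S|`. Subadditivity of `√` gives
`Σ_{j∈S} √((s/|S|) p_j) ≥ s/√|S|`, so `F(q, p) ≥ 1/√|S|`, i.e. `D_F ≤ 1 - 1/|S|`; the pure
state `b_j` with `j ∈ S` makes `p` a point mass and attains the bound. The roles of `a` and
`b` are symmetric.
-/

open Finset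

lemma sqrt_sum_le_sum_sqrt {ι : Type*} (s : Finset ι) {p : ι → ℝ} (hp : ∀ j ∈ s, 0 ≤ p j) :
    √(∑ j ∈ s, p j) ≤ ∑ j ∈ s, √(p j) := by
  have hsq : ∑ j ∈ s, p j = ∑ j ∈ s, √(p j) ^ 2 :=
    sum_congr rfl fun j hj => (Real.sq_sqrt (hp j hj)).symm
  rw [hsq, Real.sqrt_le_left (sum_nonneg fun j _ => Real.sqrt_nonneg _)]
  exact sum_sq_le_sq_sum_of_nonneg fun j _ => Real.sqrt_nonneg _

section CoarseGrain

variable {ι : Type*} [Fintype ι] [DecidableEq ι]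

def coarseGrain (S : Finset ι) (p : ι → ℝ) (j : ι) : ℝ :=
  if j ∈ S then (∑ i ∈ S, p i) / #S else p j

lemma sum_div_sqrt_card_le_sum_sqrt_coarseGrain_mul {S : Finset ι} (hS : S.Nonempty)
    {p : ι → ℝ} (hp : ∀ j, 0 ≤ p j) :
    (∑ j, p j) / √(#S) ≤ ∑ j, √(coarseGrain S p j * p j) := by
  set s := ∑ i ∈ S, p i
  have hs : 0 ≤ s := sum_nonneg fun i _ => hp i
  have hn : 1 ≤ √(#S : ℝ) := Real.one_le_sqrt.mpr (by exact_mod_cast hS.card_pos)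
  have hout : ∑ j ∈ Sᶜ, √(coarseGrain S p j * p j) = ∑ j ∈ Sᶜ, p j :=
    sum_congr rfl fun j hj => by
      rw [coarseGrain, if_neg (mem_compl.mp hj), Real.sqrt_mul_self (hp j)]
  have hin : s / √(#S) ≤ ∑ j ∈ S, √(coarseGrain S p j * p j) :=
    calc s / √(#S) = √(s / #S) * √s := by
          rw [Real.sqrt_div hs, div_mul_eq_mul_div, Real.mul_self_sqrt hs]
      _ ≤ √(s / #S) * ∑ j ∈ S, √(p j) :=
          mul_le_mul_of_nonneg_left (sqrt_sum_le_sum_sqrt S fun j _ => hp j)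
            (Real.sqrt_nonneg _)
      _ = ∑ j ∈ S, √(coarseGrain S p j * p j) := by
          rw [mul_sum]
          refine sum_congr rfl fun j hj => ?_
          rw [coarseGrain, if_pos hj, Real.sqrt_mul (div_nonneg hs (Nat.cast_nonneg _))]
  have hout_nonneg : 0 ≤ ∑ j ∈ Sᶜ, p j := sum_nonneg fun j _ => hp j
  rw [← sum_compl_add_sum S, ← sum_compl_add_sum S, hout, add_div]
  exact add_le_add (div_le_self hout_nonneg hn) hin

lemma sum_sqrt_coarseGrain_single_mul {S : Finset ι} {j₀ : ι} (hj₀ : j₀ ∈ S) :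
    ∑ j, √(coarseGrain S (Pi.single j₀ 1) j * (Pi.single j₀ 1 : ι → ℝ) j) = √(#S : ℝ)⁻¹ := by
  rw [sum_eq_single j₀ (fun j _ hj => by simp [hj]) (by simp)]
  simp [coarseGrain, hj₀, Pi.single_apply]

end CoarseGrain

lemma QF_eq_one_sub {d rA rB : ℕ} {P : Fin rA → Matrix (Fin d) (Fin d) ℂ}
    {Q : Fin rB → Matrix (Fin d) (Fin d) ℂ} {c : ℝ}
    (hle : ∀ ρ, IsDensity ρ → c ≤ classFid (probAB P Q ρ) (probB Q ρ) ^ 2)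
    (hex : ∃ ρ, IsDensity ρ ∧ classFid (probAB P Q ρ) (probB Q ρ) ^ 2 = c) :
    QF P Q = 1 - c := by
  obtain ⟨ρ₀, hρ₀, hc⟩ := hex
  refine IsGreatest.csSup_eq ⟨⟨ρ₀, hρ₀, by rw [hc]⟩, ?_⟩
  rintro x ⟨ρ, hρ, rfl⟩
  linarith [hle ρ hρ]

section RankOneProjections

variable {d : ℕ}

lemma proj_mulVec (v w : Fin d → ℂ) : proj v *ᵥ w = (star v ⬝ᵥ w) • v := by
  rw [proj, vecMulVec_mulVec, op_smul_eq_smul]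

lemma trace_proj_mul (w : Fin d → ℂ) (M : Matrix (Fin d) (Fin d) ℂ) :
    (proj w * M).trace = star w ⬝ᵥ M *ᵥ w := by
  rw [trace_mul_comm, proj, mul_vecMulVec, trace_vecMulVec, dotProduct_comm]

lemma isDensity_proj {v : Fin d → ℂ} (hv : star v ⬝ᵥ v = 1) : IsDensity (proj v) :=
  ⟨posSemidef_vecMulVec_self_star v, by rw [proj, trace_vecMulVec, dotProduct_comm, hv]⟩

lemma sum_proj_eq_one {a : Fin d → Fin d → ℂ}
    (ha : ∀ i j, star (a i) ⬝ᵥ a j = if i = j then 1 else 0) :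
    ∑ i, proj (a i) = 1 := by
  set U : Matrix (Fin d) (Fin d) ℂ := Matrix.of a
  have hU : U * Uᴴ = 1 := by
    ext i j
    simpa [U, mul_apply, one_apply, dotProduct, mul_comm, eq_comm] using ha j i
  have hsum : ∑ i, proj (a i) = (Uᴴ * U)ᵀ := by
    ext k l
    simp [U, proj, mul_apply, vecMulVec_apply, Matrix.sum_apply, mul_comm]
  rw [hsum, mul_eq_one_comm.mp hU, transpose_one]

lemma probB_proj (b : Fin d → Fin d → ℂ) (ρ : Matrix (Fin d) (Fin d) ℂ) (j : Fin d) :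
    probB (fun j => proj (b j)) ρ j = (star (b j) ⬝ᵥ ρ *ᵥ b j).re := by
  rw [probB, trace_proj_mul]

lemma sum_probB_proj {b : Fin d → Fin d → ℂ}
    (hb : ∀ i j, star (b i) ⬝ᵥ b j = if i = j then 1 else 0) (ρ : Matrix (Fin d) (Fin d) ℂ) :
    ∑ j, probB (fun j => proj (b j)) ρ j = ρ.trace.re := by
  simp_rw [probB, ← Complex.re_sum, ← trace_sum, ← sum_mul, sum_proj_eq_one hb, one_mul]

lemma probB_proj_nonneg {ρ : Matrix (Fin d) (Fin d) ℂ} (hρ : ρ.PosSemidef)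
    (b : Fin d → Fin d → ℂ) (j : Fin d) : 0 ≤ probB (fun j => proj (b j)) ρ j := by
  rw [probB_proj]
  exact (Complex.nonneg_iff.mp (hρ.dotProduct_mulVec_nonneg (b j))).1

lemma re_dotProduct_proj_mul_mul_proj_mulVec (v w : Fin d → ℂ) (ρ : Matrix (Fin d) (Fin d) ℂ) :
    (star w ⬝ᵥ (proj v * ρ * proj v) *ᵥ w).re
      = Complex.normSq (star v ⬝ᵥ w) * (star v ⬝ᵥ ρ *ᵥ v).re := by
  rw [← mulVec_mulVec, ← mulVec_mulVec, proj_mulVec, proj_mulVec, mulVec_smul]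
  simp only [dotProduct_smul, smul_eq_mul]
  rw [star_dotProduct v w, ← Complex.re_ofReal_mul, Complex.normSq_eq_conj_mul_self]
  simp only [RCLike.star_def, Complex.conj_conj]
  ring_nf

lemma probAB_proj (a b : Fin d → Fin d → ℂ) (ρ : Matrix (Fin d) (Fin d) ℂ) (j : Fin d) :
    probAB (fun i => proj (a i)) (fun j => proj (b j)) ρ j
      = ∑ i, Complex.normSq (star (a i) ⬝ᵥ b j) * probB (fun i => proj (a i)) ρ i := by
  simp only [probAB, measChannel, mul_sum, trace_sum, trace_proj_mul, Complex.re_sum,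
    re_dotProduct_proj_mul_mul_proj_mulVec, probB_proj]

end RankOneProjections

section BlockUnbiasedBases

variable {d : ℕ} {a b : Fin d → Fin d → ℂ} {S : Finset (Fin d)}

lemma probAB_proj_eq_coarseGrain
    (ha : ∀ i j, star (a i) ⬝ᵥ a j = if i = j then 1 else 0)
    (hb : ∀ i j, star (b i) ⬝ᵥ b j = if i = j then 1 else 0)
    (hcomm : ∀ i ∉ S, a i = b i)
    (horth : ∀ i ∉ S, ∀ j ∈ S, star (a i) ⬝ᵥ b j = 0)
    (hmub : ∀ i ∈ S, ∀ j ∈ S, Complex.normSq (star (a i) ⬝ᵥ b j) = (#S : ℝ)⁻¹)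
    (ρ : Matrix (Fin d) (Fin d) ℂ) :
    probAB (fun i => proj (a i)) (fun j => proj (b j)) ρ =
      coarseGrain S (probB (fun j => proj (b j)) ρ) := by
  set r := probB (fun i => proj (a i)) ρ
  set p := probB (fun j => proj (b j)) ρ
  have hrp : ∀ i ∉ S, r i = p i := fun i hi => by simp only [r, p, probB, hcomm i hi]
  have hsum : ∑ i ∈ S, r i = ∑ i ∈ S, p i := by
    have htot : ∑ i, r i = ∑ i, p i := by rw [sum_probB_proj ha, sum_probB_proj hb]
    rw [← sum_compl_add_sum S, ← sum_compl_add_sum S,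
      sum_congr rfl fun i hi => hrp i (mem_compl.mp hi)] at htot
    linarith
  funext j
  rw [probAB_proj, coarseGrain]
  split_ifs with hj
  · rw [← sum_compl_add_sum S,
      sum_eq_zero fun i hi => by simp [horth i (mem_compl.mp hi) j hj], zero_add,
      sum_congr rfl fun i hi => by rw [hmub i hi j hj], ← mul_sum, hsum, inv_mul_eq_div]
  · simpa [← hcomm j hj, ha, apply_ite Complex.normSq] using hrp j hj

theorem QF_proj_eq (hS : S.Nonempty)
    (ha : ∀ i j, star (a i) ⬝ᵥ a j = if i = j then 1 else 0)
    (hb : ∀ i j, star (b i) ⬝ᵥ b j = if i = j then 1 else 0)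
    (hcomm : ∀ i ∉ S, a i = b i)
    (horth : ∀ i ∉ S, ∀ j ∈ S, star (a i) ⬝ᵥ b j = 0)
    (hmub : ∀ i ∈ S, ∀ j ∈ S, Complex.normSq (star (a i) ⬝ᵥ b j) = (#S : ℝ)⁻¹) :
    QF (fun i => proj (a i)) (fun j => proj (b j)) = 1 - (#S : ℝ)⁻¹ := by
  have hq := probAB_proj_eq_coarseGrain ha hb hcomm horth hmub
  refine QF_eq_one_sub (fun ρ hρ => ?_) ?_
  · have hF := sum_div_sqrt_card_le_sum_sqrt_coarseGrain_mul hS (probB_proj_nonneg hρ.1 b)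
    rw [sum_probB_proj hb, hρ.2, Complex.one_re] at hF
    calc (#S : ℝ)⁻¹ = (1 / √(#S : ℝ)) ^ 2 := by
          rw [div_pow, one_pow, Real.sq_sqrt (Nat.cast_nonneg _), one_div]
      _ ≤ classFid (probAB _ _ ρ) (probB _ ρ) ^ 2 := by
          rw [classFid, hq]
          exact pow_le_pow_left₀ (by positivity) hF 2
  · obtain ⟨j₀, hj₀⟩ := hS
    refine ⟨proj (b j₀), isDensity_proj (by rw [hb, if_pos rfl]), ?_⟩
    have hp : probB (fun j => proj (b j)) (proj (b j₀)) = Pi.single j₀ 1 := by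
      funext j
      by_cases h : j = j₀
      · simp [probB_proj, proj_mulVec, hb, h]
      · simp [probB_proj, proj_mulVec, hb, h, Ne.symm h]
    rw [classFid, hq, hp, sum_sqrt_coarseGrain_single_mul hj₀, Real.sq_sqrt (by positivity)]

end BlockUnbiasedBases

theorem stmt_14 {d dc : ℕ} (hd : 0 < d) (hdc : dc ≤ d - 1)
    (a b : Fin d → (Fin d → ℂ))
    (ha : ∀ i j, star (a i) ⬝ᵥ a j = if i = j then 1 else 0)
    (hb : ∀ i j, star (b i) ⬝ᵥ b j = if i = j then 1 else 0)
    (hcomm : ∀ i : Fin d, (i : ℕ) < dc → a i = b i)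
    (horth : ∀ i j : Fin d,
      (((i : ℕ) < dc ∧ dc ≤ (j : ℕ)) ∨ (dc ≤ (i : ℕ) ∧ (j : ℕ) < dc)) →
        star (a i) ⬝ᵥ b j = 0)
    (hmub : ∀ i j : Fin d, dc ≤ (i : ℕ) → dc ≤ (j : ℕ) →
      Complex.normSq (star (a i) ⬝ᵥ b j) = 1 / ((d : ℝ) - (dc : ℝ))) :
    QF (fun i => proj (a i)) (fun j => proj (b j)) = 1 - 1 / ((d : ℝ) - (dc : ℝ)) ∧
      QF (fun j => proj (b j)) (fun i => proj (a i)) = 1 - 1 / ((d : ℝ) - (dc : ℝ)) ∧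
      (QF (fun i => proj (a i)) (fun j => proj (b j)) +
            QF (fun j => proj (b j)) (fun i => proj (a i))) / 4
        = (1 / 2) * (1 - 1 / ((d : ℝ) - (dc : ℝ))) := by
  have hdcd : dc < d := by omega
  set S := Ici (⟨dc, hdcd⟩ : Fin d)
  have hmem : ∀ i : Fin d, i ∈ S ↔ dc ≤ (i : ℕ) := fun i => by simp [S, Fin.le_def]
  have hnmem : ∀ i ∉ S, (i : ℕ) < dc := fun i hi => not_le.mp (mt (hmem i).mpr hi)
  have hcard : (#S : ℝ) = (d : ℝ) - (dc : ℝ) := by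
    rw [Fin.card_Ici, Nat.cast_sub hdcd.le]
  have hAB : QF (fun i => proj (a i)) (fun j => proj (b j)) = 1 - 1 / ((d : ℝ) - (dc : ℝ)) := by
    rw [QF_proj_eq nonempty_Ici ha hb, hcard, one_div]
    · exact fun i hi => hcomm i (hnmem i hi)
    · exact fun i hi j hj => horth i j (Or.inl ⟨hnmem i hi, (hmem j).mp hj⟩)
    · exact fun i hi j hj => by rw [hcard, ← one_div, hmub i j ((hmem i).mp hi) ((hmem j).mp hj)]
  have hBA : QF (fun j => proj (b j)) (fun i => proj (a i)) = 1 - 1 / ((d : ℝ) - (dc : ℝ)) := by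
    rw [QF_proj_eq nonempty_Ici hb ha, hcard, one_div]
    · exact fun i hi => (hcomm i (hnmem i hi)).symm
    · exact fun i hi j hj => by
        rw [star_dotProduct, horth j i (Or.inr ⟨(hmem j).mp hj, hnmem i hi⟩), star_zero]
    · exact fun i hi j hj => by
        rw [star_dotProduct, RCLike.star_def, Complex.normSq_conj, hcard, ← one_div,
          hmub j i ((hmem j).mp hj) ((hmem i).mp hi)]
  exact ⟨hAB, hBA, by rw [hAB, hBA]; ring⟩
end
end
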